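/- Let $a>0$ and let $x:(-\infty,0]\to\mathbb{R}$ be a bounded continuous function. The following are equivalent: (i) $x$ has bounded variation on each interval $[-k,-k+1]$, $k\geq 1$, with $\sup_{k\geq 1}V_{[-k,-k+1]}(x)<\infty$; (ii) there exists a bounded continuous $h:(-\infty,0]\to\mathbb{R}$ such that $t\mapsto e^{at}h(t)$ and $t\mapsto e^{at}(h(t)-x(t))$ are both nonnegative and nondecreasing. -/

import Mathlib

/-!
Put `g t = e^{a t} x t`; condition (ii) says that `g = P - Q` with `P = e^{a·} h` and
`Q = e^{a·} (h - x)` nonnegative and nondecreasing on `(-∞, 0]`.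

If the variations of `x` on unit intervals are uniformly bounded, the variation of `g` on
`[s - 1, s]` is `O(e^{a s})`, so the variation function `p t = V_{(-∞, t]}(g)` is finite,
`O(e^{a t})` and continuous. Both `p` and `p - g` are nondecreasing, and they are nonnegative
because `g → 0` at `-∞`; hence `h = e^{-a·} p` works.

Conversely, on `[u, u + 1]` the increments of `x = e^{-a·} (P - Q)` are dominated by those of the
nondecreasing function `e^{-a u} (P + Q + sup|x| e^{a·})`, whose total increase is at most
`e^a (2 sup|h| + 2 sup|x|)`.
-/

open Set Filter Topology Real

section VariationFunction

variable {α : Type*} [LinearOrder α]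

section EMetric

variable {E : Type*} [PseudoEMetricSpace E]

theorem eVariationOn_le_of_edist_le {F : Type*} [PseudoEMetricSpace F]
    {f : α → E} {g : α → F} {s : Set α}
    (h : ∀ x ∈ s, ∀ y ∈ s, edist (f x) (f y) ≤ edist (g x) (g y)) :
    eVariationOn f s ≤ eVariationOn g s :=
  iSup_mono fun p ↦ Finset.sum_le_sum fun _ _ ↦ h _ (p.2.2.2 _) _ (p.2.2.2 _)

theorem eVariationOn_Iic_eq_add (f : α → E) {s t : α} (hst : s ≤ t) :
    eVariationOn f (Iic t) = eVariationOn f (Iic s) + eVariationOn f (Icc s t) := by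
  rw [← eVariationOn.union f isGreatest_Iic (isLeast_Icc hst), Iic_union_Icc_eq_Iic hst]

namespace BoundedVariationOn

variable {f : α → E} {b : α}

theorem toReal_eVariationOn_Iic_eqOn (hf : BoundedVariationOn f (Iic b)) :
    EqOn (fun t ↦ (eVariationOn f (Iic t)).toReal)
      (fun t ↦ (eVariationOn f (Iic b)).toReal + variationOnFromTo f (Iic b) b t) (Iic b) := by
  intro t (ht : t ≤ b)
  have hIcc : Iic b ∩ Icc t b = Icc t b := inter_eq_right.mpr Icc_subset_Iic_self
  simp only [variationOnFromTo.eq_of_ge _ _ ht, hIcc, eVariationOn_Iic_eq_add f ht]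
  have hfin : eVariationOn f (Iic t) + eVariationOn f (Icc t b) ≠ ⊤ :=
    eVariationOn_Iic_eq_add f ht ▸ hf
  rw [ENNReal.toReal_add (ENNReal.add_ne_top.mp hfin).1 (ENNReal.add_ne_top.mp hfin).2]
  ring

theorem monotoneOn_toReal_eVariationOn_Iic (hf : BoundedVariationOn f (Iic b)) :
    MonotoneOn (fun t ↦ (eVariationOn f (Iic t)).toReal) (Iic b) := fun _ _ _ ht hst ↦
  ENNReal.toReal_mono (hf.mono (Iic_subset_Iic.mpr ht))
    (eVariationOn.mono f (Iic_subset_Iic.mpr hst))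

end BoundedVariationOn

end EMetric

theorem eVariationOn_Icc_le_of_abs_sub_le {f g : α → ℝ} {u v : α}
    (h : ∀ x ∈ Icc u v, ∀ y ∈ Icc u v, x ≤ y → |f y - f x| ≤ g y - g x) :
    eVariationOn f (Icc u v) ≤ ENNReal.ofReal (g v - g u) := by
  have hg : MonotoneOn g (Icc u v) := fun x hx y hy hxy ↦
    sub_nonneg.mp ((abs_nonneg _).trans (h x hx y hy hxy))
  have hedist : ∀ x ∈ Icc u v, ∀ y ∈ Icc u v, edist (f x) (f y) ≤ edist (g x) (g y) := by
    intro x hx y hy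
    wlog hxy : x ≤ y generalizing x y
    · rw [edist_comm, edist_comm (g x)]
      exact this y hy x hx (le_of_not_ge hxy)
    rw [edist_dist, edist_dist, Real.dist_eq, Real.dist_eq, abs_sub_comm, abs_sub_comm (g x),
      abs_of_nonneg (sub_nonneg.mpr (hg hx hy hxy))]
    exact ENNReal.ofReal_le_ofReal (h x hx y hy hxy)
  rcases le_or_gt u v with huv | hvu
  · calc eVariationOn f (Icc u v) ≤ eVariationOn g (Icc u v) :=
          eVariationOn_le_of_edist_le hedist
      _ = ENNReal.ofReal (g v - g u) := by
          simpa using hg.eVariationOn_eq (left_mem_Icc.mpr huv) (right_mem_Icc.mpr huv)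
  · simp [Icc_eq_empty_of_lt hvu]

namespace BoundedVariationOn

variable {f : α → ℝ} {b : α}

theorem monotoneOn_toReal_eVariationOn_Iic_sub (hf : BoundedVariationOn f (Iic b)) :
    MonotoneOn (fun t ↦ (eVariationOn f (Iic t)).toReal - f t) (Iic b) := by
  refine ((variationOnFromTo.sub_self_monotoneOn hf.locallyBoundedVariationOn
    self_mem_Iic).const_add (eVariationOn f (Iic b)).toReal).congr fun t ht ↦ ?_
  simp only [Pi.sub_apply, hf.toReal_eVariationOn_Iic_eqOn ht]
  ring

theorem le_toReal_eVariationOn_Iic [Nonempty α] (hf : BoundedVariationOn f (Iic b))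
    (hlim : Tendsto f atBot (𝓝 0)) {t : α} (ht : t ≤ b) :
    f t ≤ (eVariationOn f (Iic t)).toReal := by
  have hlim' : Tendsto (fun s ↦ f t - f s) atBot (𝓝 (f t)) := by
    simpa using tendsto_const_nhds.sub hlim
  refine le_of_tendsto hlim' ?_
  filter_upwards [eventually_le_atBot t] with s hs
  calc f t - f s ≤ dist (f s) (f t) := by rw [Real.dist_eq, abs_sub_comm]; exact le_abs_self _
    _ ≤ (eVariationOn f (Iic t)).toReal := by
      rw [dist_edist]
      exact ENNReal.toReal_mono (hf.mono (Iic_subset_Iic.mpr ht))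
        (eVariationOn.edist_le f hs self_mem_Iic)

end BoundedVariationOn

section OrderTopology

variable [TopologicalSpace α] [OrderTopology α] {E : Type*} [PseudoMetricSpace E] {f : α → E}

theorem LocallyBoundedVariationOn.continuousOn_variationOnFromTo {s : Set α}
    (hf : LocallyBoundedVariationOn f s) (hc : ContinuousOn f s) {a : α} (ha : a ∈ s) :
    ContinuousOn (variationOnFromTo f s a) s := by
  intro x hx
  rw [continuousWithinAt_iff_continuous_left'_right', ContinuousWithinAt, ContinuousWithinAt]
  constructor
  · simpa using variationOnFromTo.tendsto_left (hf := hf) (ha := ha) (hb := hx)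
      ((hc x hx).mono inter_subset_left)
  · simpa using variationOnFromTo.tendsto_right (hf := hf) (ha := ha) (hb := hx)
      ((hc x hx).mono inter_subset_left)

theorem BoundedVariationOn.continuousOn_toReal_eVariationOn_Iic {b : α}
    (hf : BoundedVariationOn f (Iic b)) (hc : ContinuousOn f (Iic b)) :
    ContinuousOn (fun t ↦ (eVariationOn f (Iic t)).toReal) (Iic b) :=
  (continuousOn_const.add (hf.locallyBoundedVariationOn.continuousOn_variationOnFromTo hc
    self_mem_Iic)).congr hf.toReal_eVariationOn_Iic_eqOn

end OrderTopology

end VariationFunction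

theorem eVariationOn_Icc_sub_one_le_two_mul {E : Type*} [PseudoEMetricSpace E] {f : ℝ → E}
    {C : ENNReal} (h : ∀ k : ℕ, 1 ≤ k → eVariationOn f (Icc (-(k : ℝ)) (-(k : ℝ) + 1)) ≤ C)
    {t : ℝ} (ht : t ≤ 0) :
    eVariationOn f (Icc (t - 1) t) ≤ 2 * C := by
  set k := ⌊-t⌋₊ + 1
  have hk_le : (k : ℝ) - 1 ≤ -t := by
    simpa [k] using Nat.floor_le (neg_nonneg.mpr ht)
  have hk_gt : -t < k := by simpa [k] using Nat.lt_floor_add_one (-t)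
  have hsplit := eVariationOn.Icc_add_Icc f (s := univ)
    (by push_cast; linarith : -((k + 1 : ℕ) : ℝ) ≤ -(k : ℝ)) (by linarith : -(k : ℝ) ≤ -k + 1)
    (mem_univ _)
  simp only [univ_inter] at hsplit
  calc eVariationOn f (Icc (t - 1) t)
      ≤ eVariationOn f (Icc (-((k + 1 : ℕ) : ℝ)) (-k + 1)) :=
        eVariationOn.mono f (Icc_subset_Icc (by push_cast; linarith) (by linarith))
    _ ≤ C + C := by
        rw [← hsplit]
        gcongr
        · simpa using h (k + 1) le_add_self
        · exact h k le_add_self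
    _ = 2 * C := (two_mul C).symm

theorem eVariationOn_Iic_le_of_forall_Icc_sub_one_le {E : Type*} [PseudoEMetricSpace E]
    {f : ℝ → E} {a K t : ℝ} (ha : 0 < a) (hK : 0 ≤ K)
    (h : ∀ s ≤ t, eVariationOn f (Icc (s - 1) s) ≤ ENNReal.ofReal (K * exp (a * s))) :
    eVariationOn f (Iic t) ≤ ENNReal.ofReal (K / (1 - exp (-a)) * exp (a * t)) := by
  set L := K / (1 - exp (-a))
  have hq : exp (-a) < 1 := exp_lt_one_iff.mpr (neg_lt_zero.mpr ha)
  -- `L` is the fixed point of `L ↦ e^{-a} L + K`, which makes the induction close up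
  have hfix : exp (-a) * L + K = L := by
    simp only [L]
    field_simp [(sub_pos.mpr hq).ne']
    ring
  have hIcc : ∀ n : ℕ, ∀ s ≤ t,
      eVariationOn f (Icc (s - n) s) ≤ ENNReal.ofReal (L * exp (a * s)) := by
    intro n
    induction n with
    | zero => intro s _; simp
    | succ n ih =>
      intro s hs
      have hsplit := eVariationOn.Icc_add_Icc f (s := univ)
        (by push_cast; linarith : s - (n + 1 : ℕ) ≤ s - 1) (by linarith : s - 1 ≤ s) (mem_univ _)
      simp only [univ_inter] at hsplit
      rw [← hsplit]
      calc eVariationOn f (Icc (s - (n + 1 : ℕ)) (s - 1)) + eVariationOn f (Icc (s - 1) s)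
          ≤ ENNReal.ofReal (L * exp (a * (s - 1))) + ENNReal.ofReal (K * exp (a * s)) := by
            gcongr
            · have := ih (s - 1) (by linarith)
              rwa [show s - 1 - (n : ℝ) = s - (n + 1 : ℕ) by push_cast; ring] at this
            · exact h s hs
        _ = ENNReal.ofReal (L * exp (a * s)) := by
            rw [← ENNReal.ofReal_add (by positivity) (by positivity),
              show a * (s - 1) = -a + a * s by ring, exp_add]
            congr 1
            linear_combination exp (a * s) * hfix
  rw [eVariationOn.eq_biSup_inter_Icc]
  refine iSup₂_le fun p _ ↦ ?_
  refine (eVariationOn.mono f ?_).trans (hIcc ⌈t - p.1⌉₊ t le_rfl)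
  rintro r ⟨hrt, hr1, -⟩
  exact ⟨by linarith [Nat.le_ceil (t - p.1)], hrt⟩

theorem eVariationOn_exp_mul_Icc_le {a : ℝ} (ha : 0 ≤ a) {x : ℝ → ℝ} {u v M : ℝ}
    (hx : ∀ t ∈ Icc u v, |x t| ≤ M) :
    eVariationOn (fun t ↦ exp (a * t) * x t) (Icc u v) ≤
      ENNReal.ofReal (exp (a * v)) * (eVariationOn x (Icc u v) + ENNReal.ofReal M) := by
  have hexp : MonotoneOn (fun t ↦ exp (a * t)) (Icc u v) := fun s _ t _ hst ↦
    exp_le_exp.mpr (mul_le_mul_of_nonneg_left hst ha)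
  refine (eVariationOn_fun_mul_le (C := ENNReal.ofReal (exp (a * v))) (D := ENNReal.ofReal M)
    (fun t ht ↦ ?_) (fun t ht ↦ ?_)).trans ?_
  · rw [Real.enorm_eq_ofReal_abs, abs_of_pos (exp_pos _)]
    exact ENNReal.ofReal_le_ofReal (hexp ht (right_mem_Icc.mpr (ht.1.trans ht.2)) ht.2)
  · rw [Real.enorm_eq_ofReal_abs]
    exact ENNReal.ofReal_le_ofReal (hx t ht)
  · rcases le_or_gt u v with huv | hvu
    · have hvar : eVariationOn (fun t ↦ exp (a * t)) (Icc u v) ≤ ENNReal.ofReal (exp (a * v)) := by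
        rw [← inter_self (Icc u v), hexp.eVariationOn_eq (left_mem_Icc.mpr huv)
          (right_mem_Icc.mpr huv)]
        exact ENNReal.ofReal_le_ofReal (sub_le_self _ (exp_pos _).le)
      calc _ ≤ ENNReal.ofReal (exp (a * v)) * eVariationOn x (Icc u v) +
            ENNReal.ofReal M * ENNReal.ofReal (exp (a * v)) := by gcongr
        _ = _ := by ring
    · simp [Icc_eq_empty_of_lt hvu]

section ExpWeightedDecomposition

variable {a M : ℝ} {x P Q : ℝ → ℝ}

theorem abs_sub_le_of_exp_mul_eq_sub (ha : 0 ≤ a)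
    (hx : ∀ r, exp (a * r) * x r = P r - Q r) {u s t : ℝ} (hus : u ≤ s) (hst : s ≤ t)
    (hP : P s ≤ P t) (hQ : Q s ≤ Q t) (hM : |x s| ≤ M) :
    |x t - x s| ≤ exp (-(a * u)) *
      ((P t + Q t + M * exp (a * t)) - (P s + Q s + M * exp (a * s))) := by
  have hts : exp (-(a * t)) * exp (a * t) = 1 := by rw [← exp_add]; simp
  have hmono : exp (a * s) ≤ exp (a * t) := exp_le_exp.mpr (mul_le_mul_of_nonneg_left hst ha)
  have hdecay : exp (-(a * t)) * exp (a * s) ≤ 1 := hts ▸ by gcongr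
  have hM0 : 0 ≤ M := (abs_nonneg _).trans hM
  have hxt : x t = exp (-(a * t)) * (P t - Q t) := by
    linear_combination (-x t) * hts + exp (-(a * t)) * hx t
  have hdiff : x t - x s = exp (-(a * t)) * ((P t - P s) - (Q t - Q s)) -
      (1 - exp (-(a * t)) * exp (a * s)) * x s := by
    rw [hxt]; linear_combination (-exp (-(a * t))) * hx s
  have hbound : |x t - x s| ≤ exp (-(a * t)) *
      ((P t - P s) + (Q t - Q s) + M * (exp (a * t) - exp (a * s))) := by
    rw [hdiff]
    refine (abs_sub _ _).trans ?_
    rw [abs_mul, abs_mul, abs_of_pos (exp_pos _), abs_of_nonneg (sub_nonneg.mpr hdecay)]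
    have hPQ : |P t - P s - (Q t - Q s)| ≤ (P t - P s) + (Q t - Q s) :=
      abs_le.mpr ⟨by linarith, by linarith⟩
    have hM' : exp (-(a * t)) * (M * (exp (a * t) - exp (a * s))) =
        (1 - exp (-(a * t)) * exp (a * s)) * M := by linear_combination M * hts
    nlinarith [mul_le_mul_of_nonneg_left hPQ (exp_pos (-(a * t))).le,
      mul_le_mul_of_nonneg_left hM (sub_nonneg.mpr hdecay)]
  refine hbound.trans (le_of_eq_of_le (by ring) (mul_le_mul_of_nonneg_right ?_ ?_))
  · exact exp_le_exp.mpr (by nlinarith)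
  · nlinarith [mul_le_mul_of_nonneg_left hmono hM0]

theorem eVariationOn_Icc_le_of_exp_mul_eq_sub (ha : 0 ≤ a)
    (hx : ∀ r, exp (a * r) * x r = P r - Q r) {u v : ℝ}
    (hP : MonotoneOn P (Icc u v)) (hQ : MonotoneOn Q (Icc u v))
    (hM : ∀ r ∈ Icc u v, |x r| ≤ M) :
    eVariationOn x (Icc u v) ≤ ENNReal.ofReal (exp (-(a * u)) *
      ((P v + Q v + M * exp (a * v)) - (P u + Q u + M * exp (a * u)))) := by
  refine (eVariationOn_Icc_le_of_abs_sub_le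
    (g := fun r ↦ exp (-(a * u)) * (P r + Q r + M * exp (a * r)))
    fun s hs t ht hst ↦ ?_).trans_eq (by rw [mul_sub])
  rw [← mul_sub]
  exact abs_sub_le_of_exp_mul_eq_sub ha hx hs.1 hst (hP hs ht hst) (hQ hs ht hst) (hM s hs)

end ExpWeightedDecomposition

section ExpWeighted

variable {a c Mx : ℝ} {x : ℝ → ℝ}

theorem eVariationOn_exp_mul_Iic_le (ha : 0 < a) (hc : 0 ≤ c) (hMx : ∀ t ≤ (0 : ℝ), |x t| ≤ Mx)
    (hvar : ∀ k : ℕ, 1 ≤ k → eVariationOn x (Icc (-(k : ℝ)) (-(k : ℝ) + 1)) ≤ ENNReal.ofReal c)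
    {t : ℝ} (ht : t ≤ 0) :
    eVariationOn (fun s ↦ exp (a * s) * x s) (Iic t) ≤
      ENNReal.ofReal ((2 * c + Mx) / (1 - exp (-a)) * exp (a * t)) := by
  have hMx0 : 0 ≤ Mx := (abs_nonneg _).trans (hMx 0 le_rfl)
  refine eVariationOn_Iic_le_of_forall_Icc_sub_one_le ha (by positivity) fun s hs ↦ ?_
  calc eVariationOn (fun s ↦ exp (a * s) * x s) (Icc (s - 1) s)
      ≤ ENNReal.ofReal (exp (a * s)) * (eVariationOn x (Icc (s - 1) s) + ENNReal.ofReal Mx) :=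
        eVariationOn_exp_mul_Icc_le ha.le fun r hr ↦ hMx r (hr.2.trans (hs.trans ht))
    _ ≤ ENNReal.ofReal (exp (a * s)) * (2 * ENNReal.ofReal c + ENNReal.ofReal Mx) := by
        gcongr
        exact eVariationOn_Icc_sub_one_le_two_mul hvar (hs.trans ht)
    _ = ENNReal.ofReal ((2 * c + Mx) * exp (a * s)) := by
        rw [ENNReal.ofReal_mul (by positivity), ENNReal.ofReal_add (by positivity) hMx0,
          ENNReal.ofReal_mul zero_le_two, ENNReal.ofReal_ofNat, mul_comm]

theorem exists_exp_mul_monotoneOn_of_eVariationOn_le (ha : 0 < a) (hc : 0 ≤ c)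
    (hxc : ContinuousOn x (Iic 0)) (hMx : ∀ t ≤ (0 : ℝ), |x t| ≤ Mx)
    (hvar : ∀ k : ℕ, 1 ≤ k → eVariationOn x (Icc (-(k : ℝ)) (-(k : ℝ) + 1)) ≤ ENNReal.ofReal c) :
    ∃ h : ℝ → ℝ, ContinuousOn h (Iic 0) ∧ (∃ Mh : ℝ, ∀ t ≤ (0:ℝ), |h t| ≤ Mh) ∧
      (∀ t ≤ (0:ℝ), 0 ≤ exp (a * t) * h t) ∧
      MonotoneOn (fun t ↦ exp (a * t) * h t) (Iic 0) ∧
      (∀ t ≤ (0:ℝ), 0 ≤ exp (a * t) * (h t - x t)) ∧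
      MonotoneOn (fun t ↦ exp (a * t) * (h t - x t)) (Iic 0) := by
  set g : ℝ → ℝ := fun s ↦ exp (a * s) * x s
  set K := (2 * c + Mx) / (1 - exp (-a))
  set p : ℝ → ℝ := fun t ↦ (eVariationOn g (Iic t)).toReal
  have hK : 0 ≤ K := div_nonneg (by linarith [(abs_nonneg _).trans (hMx 0 le_rfl)])
    (sub_nonneg.mpr (exp_le_one_iff.mpr (by linarith)))
  have hgvar : ∀ t ≤ (0 : ℝ), eVariationOn g (Iic t) ≤ ENNReal.ofReal (K * exp (a * t)) :=
    fun t ht ↦ eVariationOn_exp_mul_Iic_le ha hc hMx hvar ht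
  have hgBV : BoundedVariationOn g (Iic 0) :=
    ne_top_of_le_ne_top ENNReal.ofReal_ne_top (hgvar 0 le_rfl)
  have hgc : ContinuousOn g (Iic 0) :=
    (continuous_exp.comp (continuous_const_mul a)).continuousOn.mul hxc
  have hglim : Tendsto g atBot (𝓝 0) := by
    have hexp : Tendsto (fun s ↦ exp (a * s) * Mx) atBot (𝓝 0) := by
      simpa using (tendsto_exp_atBot.comp (tendsto_id.const_mul_atBot ha)).mul_const Mx
    refine squeeze_zero_norm' ?_ hexp
    filter_upwards [eventually_le_atBot 0] with s hs
    rw [norm_mul, Real.norm_eq_abs, abs_of_pos (exp_pos _)]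
    exact mul_le_mul_of_nonneg_left (hMx s hs) (exp_pos _).le
  have hp : ∀ t, exp (a * t) * (exp (-(a * t)) * p t) = p t := fun t ↦ by
    rw [← mul_assoc, ← exp_add, add_neg_cancel, exp_zero, one_mul]
  have hpx : ∀ t, exp (a * t) * (exp (-(a * t)) * p t - x t) = p t - g t := fun t ↦ by
    rw [mul_sub, hp]
  refine ⟨fun t ↦ exp (-(a * t)) * p t, ?_, ⟨K, fun t ht ↦ ?_⟩, fun t _ ↦ ?_, ?_, fun t ht ↦ ?_, ?_⟩
  · exact (continuous_exp.comp (continuous_const_mul a).neg).continuousOn.mul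
      (hgBV.continuousOn_toReal_eVariationOn_Iic hgc)
  · have hpK : p t ≤ K * exp (a * t) :=
      ENNReal.toReal_le_of_le_ofReal (by positivity) (hgvar t ht)
    rw [abs_of_nonneg (by positivity)]
    calc exp (-(a * t)) * p t ≤ exp (-(a * t)) * (K * exp (a * t)) := by gcongr
      _ = K := by rw [mul_left_comm, ← exp_add, neg_add_cancel, exp_zero, mul_one]
  · rw [hp]; exact ENNReal.toReal_nonneg
  · exact hgBV.monotoneOn_toReal_eVariationOn_Iic.congr fun t _ ↦ (hp t).symm
  · rw [hpx, sub_nonneg]; exact hgBV.le_toReal_eVariationOn_Iic hglim ht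
  · exact hgBV.monotoneOn_toReal_eVariationOn_Iic_sub.congr fun t _ ↦ (hpx t).symm

theorem eVariationOn_Icc_le_of_exp_mul_monotoneOn (ha : 0 ≤ a) {h : ℝ → ℝ} {Mh : ℝ}
    (hMx : ∀ t ≤ (0 : ℝ), |x t| ≤ Mx) (hMh : ∀ t ≤ (0 : ℝ), |h t| ≤ Mh)
    (hP0 : ∀ t ≤ (0 : ℝ), 0 ≤ exp (a * t) * h t)
    (hP : MonotoneOn (fun t ↦ exp (a * t) * h t) (Iic 0))
    (hQ0 : ∀ t ≤ (0 : ℝ), 0 ≤ exp (a * t) * (h t - x t))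
    (hQ : MonotoneOn (fun t ↦ exp (a * t) * (h t - x t)) (Iic 0)) {u : ℝ} (hu : u + 1 ≤ 0) :
    eVariationOn x (Icc u (u + 1)) ≤ ENNReal.ofReal (exp a * (2 * Mh + 2 * Mx)) := by
  have hsub : Icc u (u + 1) ⊆ Iic 0 := fun r hr ↦ hr.2.trans hu
  refine (eVariationOn_Icc_le_of_exp_mul_eq_sub ha (fun r ↦ by ring) (hP.mono hsub) (hQ.mono hsub)
    fun r hr ↦ hMx r (hsub hr)).trans (ENNReal.ofReal_le_ofReal ?_)
  have hu0 : u ≤ 0 := by linarith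
  have hMx0 : 0 ≤ Mx := (abs_nonneg _).trans (hMx 0 le_rfl)
  have hexp : exp (-(a * u)) * exp (a * (u + 1)) = exp a := by rw [← exp_add]; ring_nf
  have hbound : exp (a * (u + 1)) * h (u + 1) + exp (a * (u + 1)) * (h (u + 1) - x (u + 1)) +
      Mx * exp (a * (u + 1)) ≤ exp (a * (u + 1)) * (2 * Mh + 2 * Mx) := by
    nlinarith [exp_pos (a * (u + 1)), abs_le.mp (hMx _ hu), abs_le.mp (hMh _ hu)]
  calc _ ≤ exp (-(a * u)) * (exp (a * (u + 1)) * (2 * Mh + 2 * Mx)) := by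
        gcongr
        linarith [hP0 u hu0, hQ0 u hu0, mul_nonneg hMx0 (exp_pos (a * u)).le]
    _ = exp a * (2 * Mh + 2 * Mx) := by rw [← mul_assoc, hexp]

end ExpWeighted

/-- for a bounded continuous `x : (-∞,0] → ℝ`, having uniformly
bounded variation on the intervals `[-k,-k+1]` is equivalent to the existence of
a bounded continuous `h` with `e^{a·}h` and `e^{a·}(h-x)` nonnegative and
nondecreasing on `(-∞,0]`. -/
theorem stmt2 (a : ℝ) (ha : 0 < a) (x : ℝ → ℝ)
    (hxcont : ContinuousOn x (Iic 0))
    (hxbdd : ∃ Mx : ℝ, ∀ t ≤ (0:ℝ), |x t| ≤ Mx) :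
    ((∀ k : ℕ, 1 ≤ k → BoundedVariationOn x (Icc (-(k:ℝ)) (-(k:ℝ) + 1))) ∧
      ∃ c : ℝ, ∀ k : ℕ, 1 ≤ k →
        eVariationOn x (Icc (-(k:ℝ)) (-(k:ℝ) + 1)) ≤ ENNReal.ofReal c)
    ↔
    (∃ h : ℝ → ℝ, ContinuousOn h (Iic 0) ∧ (∃ Mh : ℝ, ∀ t ≤ (0:ℝ), |h t| ≤ Mh) ∧
      (∀ t ≤ (0:ℝ), 0 ≤ Real.exp (a * t) * h t) ∧
      MonotoneOn (fun t => Real.exp (a * t) * h t) (Iic 0) ∧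
      (∀ t ≤ (0:ℝ), 0 ≤ Real.exp (a * t) * (h t - x t)) ∧
      MonotoneOn (fun t => Real.exp (a * t) * (h t - x t)) (Iic 0)) := by
  obtain ⟨Mx, hMx⟩ := hxbdd
  constructor
  · rintro ⟨-, c, hc⟩
    exact exists_exp_mul_monotoneOn_of_eVariationOn_le ha (le_max_right c 0) hxcont hMx
      fun k hk ↦ (hc k hk).trans (ENNReal.ofReal_le_ofReal (le_max_left c 0))
  · rintro ⟨h, -, ⟨Mh, hMh⟩, hP0, hP, hQ0, hQ⟩
    have hvar : ∀ k : ℕ, 1 ≤ k → eVariationOn x (Icc (-(k : ℝ)) (-(k : ℝ) + 1)) ≤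
        ENNReal.ofReal (exp a * (2 * Mh + 2 * Mx)) := fun k hk ↦
      eVariationOn_Icc_le_of_exp_mul_monotoneOn ha.le hMx hMh hP0 hP hQ0 hQ
        (by simpa using (Nat.one_le_cast (α := ℝ)).mpr hk)
    exact ⟨fun k hk ↦ ne_top_of_le_ne_top ENNReal.ofReal_ne_top (hvar k hk), _, hvar⟩
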